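/- arXiv:2109.04599 — 4 statements merged into one kernel-verified Lean document; each statement's English description precedes it below -/
import Mathlib

section
/- Under the same hypotheses (nonnegative non-increasing vectors r, s in ℝ^n with s weakly majorized by r, and p > 1), equality ‖s‖_p = ‖r‖_p holds if and only if r = s. -/
lemma abel_nonneg (m : ℕ) : ∀ (a d : ℕ → ℝ),
    (∀ i j, i ≤ j → j < m → a j ≤ a i) → (∀ i, i < m → 0 ≤ a i) →
    (∀ k, k < m → 0 ≤ ∑ i ∈ Finset.range (k+1), d i) →
    0 ≤ ∑ i ∈ Finset.range m, a i * d i := by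
  induction m with
  | zero => intro a d _ _ _; simp
  | succ m ih =>
    intro a d ha ha0 hd
    have key : ∑ i ∈ Finset.range (m+1), a i * d i
        = (∑ i ∈ Finset.range (m+1), (a i - a m) * d i)
          + a m * ∑ i ∈ Finset.range (m+1), d i := by
      rw [Finset.mul_sum, ← Finset.sum_add_distrib]
      congr 1; ext i; ring
    rw [key]
    have h1 : 0 ≤ ∑ i ∈ Finset.range (m+1), (a i - a m) * d i := by
      rw [Finset.sum_range_succ]
      simp only [sub_self, zero_mul, add_zero]
      exact ih (fun i => a i - a m) d
        (fun i j hij hj => by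
          have := ha i j hij (Nat.lt_succ_of_lt hj); linarith)
        (fun i hi => by
          have := ha i m (Nat.le_of_lt hi) (Nat.lt_succ_self m); linarith)
        (fun k hk => hd k (Nat.lt_succ_of_lt hk))
    have h2 : 0 ≤ a m * ∑ i ∈ Finset.range (m+1), d i :=
      mul_nonneg (ha0 m (Nat.lt_succ_self m)) (hd m (Nat.lt_succ_self m))
    linarith

lemma tangent_lt (p a b : ℝ) (hp : 1 < p) (ha : 0 ≤ a) (hb : 0 ≤ b) (hab : a ≠ b) :
    b ^ p + p * b ^ (p - 1) * (a - b) < a ^ p := by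
  rcases hb.eq_or_lt with hb0 | hb0
  · have hppos : (0:ℝ) < p := lt_trans one_pos hp
    have h1 : (0:ℝ) ^ p = 0 := Real.zero_rpow hppos.ne'
    have h2 : (0:ℝ) ^ (p - 1) = 0 := Real.zero_rpow (by linarith)
    rw [← hb0, h1, h2]
    have hapos : 0 < a := lt_of_le_of_ne ha (fun h => hab (by rw [← h, ← hb0]))
    simpa using Real.rpow_pos_of_pos hapos p
  · set x := a / b - 1 with hx_def
    have hx : -1 ≤ x := by
      have : 0 ≤ a / b := div_nonneg ha hb0.le
      simp [hx_def]; linarith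
    have hx' : x ≠ 0 := by
      simp only [hx_def, sub_ne_zero]
      intro h
      exact hab (by field_simp at h; linarith)
    have hber := one_add_mul_self_lt_rpow_one_add hx hx' hp
    have h1x : 1 + x = a / b := by ring
    rw [h1x, Real.div_rpow ha hb0.le] at hber
    have hbp : 0 < b ^ p := Real.rpow_pos_of_pos hb0 p
    have key := mul_lt_mul_of_pos_right hber hbp
    rw [div_mul_cancel₀ _ hbp.ne'] at key
    calc b ^ p + p * b ^ (p - 1) * (a - b) = (1 + p * x) * b ^ p := by
          rw [Real.rpow_sub_one hb0.ne']
          field_simp [hx_def]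
          have hba : b * (a / b) = a := by field_simp
          rw [hx_def]; linear_combination (-p) * hba
      _ < a ^ p := key

lemma sum_Iic_fin (n : ℕ) (f : Fin n → ℝ) (k : Fin n) :
    ∑ i ∈ Finset.Iic k, f i
      = ∑ j ∈ Finset.range ((k : ℕ) + 1), (if h : j < n then f ⟨j, h⟩ else 0) := by
  rw [show Finset.range ((k : ℕ) + 1) = Finset.Iic (k : ℕ) by ext; simp [Nat.lt_succ_iff],
      ← Fin.map_valEmbedding_Iic, Finset.sum_map]
  apply Finset.sum_congr rfl
  intro i _
  simp [i.isLt]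

/-- For nonnegative, non-increasing vectors `r, s` in `ℝ^n` with `s` weakly majorized by `r`
and `p > 1`, the `p`-norms are equal if and only if `r = s`. -/
theorem pnorm_eq_iff_of_weakly_majorized (n : ℕ) (r s : Fin n → ℝ)
    (hr_mono : Antitone r) (hs_mono : Antitone s)
    (hr_nonneg : ∀ i, 0 ≤ r i) (hs_nonneg : ∀ i, 0 ≤ s i)
    (p : ℝ) (hp : 1 < p)
    (hmaj : ∀ k : Fin n, ∑ i ∈ Finset.Iic k, s i ≤ ∑ i ∈ Finset.Iic k, r i) :
    (∑ i, |s i| ^ p) ^ (1 / p) = (∑ i, |r i| ^ p) ^ (1 / p) ↔ r = s := by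
  have hppos : (0 : ℝ) < p := lt_trans one_pos hp
  constructor
  · intro heq
    -- recover equality of the p-th power sums
    have hA : (0:ℝ) ≤ ∑ i, |s i| ^ p :=
      Finset.sum_nonneg fun i _ => Real.rpow_nonneg (abs_nonneg _) p
    have hB : (0:ℝ) ≤ ∑ i, |r i| ^ p :=
      Finset.sum_nonneg fun i _ => Real.rpow_nonneg (abs_nonneg _) p
    have hsum' : ∑ i, |s i| ^ p = ∑ i, |r i| ^ p := by
      have := congrArg (fun x : ℝ => x ^ p) heq
      simpa [one_div, Real.rpow_inv_rpow hA hppos.ne', Real.rpow_inv_rpow hB hppos.ne']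
        using this
    have hsum : ∑ i, s i ^ p = ∑ i, r i ^ p := by
      simpa [fun i => abs_of_nonneg (hs_nonneg i), fun i => abs_of_nonneg (hr_nonneg i)]
        using hsum'
    -- T = ∑ sᵢ^(p-1) (rᵢ - sᵢ) ≥ 0 by Abel summation
    set A : ℕ → ℝ := fun j => if h : j < n then s ⟨j, h⟩ ^ (p - 1) else 0 with hA_def
    set D : ℕ → ℝ := fun j => if h : j < n then r ⟨j, h⟩ - s ⟨j, h⟩ else 0 with hD_def
    have hT0 : 0 ≤ ∑ j ∈ Finset.range n, A j * D j := by
      apply abel_nonneg n A D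
      · intro i j hij hj
        simp only [hA_def]
        rw [dif_pos hj, dif_pos (lt_of_le_of_lt hij hj)]
        exact Real.rpow_le_rpow (hs_nonneg _) (hs_mono (by simpa using hij)) (by linarith)
      · intro i hi
        simp only [hA_def]
        rw [dif_pos hi]
        exact Real.rpow_nonneg (hs_nonneg _) _
      · intro k hk
        have := hmaj ⟨k, hk⟩
        have h1 := sum_Iic_fin n s ⟨k, hk⟩
        have h2 := sum_Iic_fin n r ⟨k, hk⟩
        have h3 : ∑ j ∈ Finset.range (k + 1), D j
            = (∑ j ∈ Finset.range (k + 1), (if h : j < n then r ⟨j, h⟩ else 0))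
              - ∑ j ∈ Finset.range (k + 1), (if h : j < n then s ⟨j, h⟩ else 0) := by
          rw [← Finset.sum_sub_distrib]
          apply Finset.sum_congr rfl
          intro j _
          simp only [hD_def]
          by_cases h : j < n <;> simp [h]
        rw [h3, ← h1, ← h2]
        linarith
    have hTfin : ∑ j ∈ Finset.range n, A j * D j
        = ∑ i : Fin n, s i ^ (p - 1) * (r i - s i) := by
      rw [← Fin.sum_univ_eq_sum_range (fun j => A j * D j) n]
      apply Finset.sum_congr rfl
      intro i _
      simp only [hA_def, hD_def]
      rw [dif_pos i.isLt, dif_pos i.isLt]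
    set T : ℝ := ∑ i : Fin n, s i ^ (p - 1) * (r i - s i) with hT_def
    have hT : 0 ≤ T := hTfin ▸ hT0
    -- termwise tangent-line inequality
    have htan : ∀ i : Fin n,
        s i ^ p + p * s i ^ (p - 1) * (r i - s i) ≤ r i ^ p := by
      intro i
      by_cases h : r i = s i
      · rw [h]; simp
      · exact (tangent_lt p (r i) (s i) hp (hr_nonneg i) (hs_nonneg i) h).le
    -- sum of tangent inequalities forces T ≤ 0, hence T = 0
    have hsumtan : ∑ i, s i ^ p + p * T ≤ ∑ i, r i ^ p := by
      calc ∑ i, s i ^ p + p * T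
            = ∑ i, (s i ^ p + p * s i ^ (p - 1) * (r i - s i)) := by
              rw [hT_def, Finset.mul_sum, ← Finset.sum_add_distrib]
              apply Finset.sum_congr rfl
              intro i _; ring
        _ ≤ ∑ i, r i ^ p := Finset.sum_le_sum fun i _ => htan i
    have hTzero : T = 0 := by nlinarith
    -- now each tangent inequality is an equality
    have hzero : ∑ i, (r i ^ p - (s i ^ p + p * s i ^ (p - 1) * (r i - s i))) = 0 := by
      rw [Finset.sum_sub_distrib, Finset.sum_add_distrib]
      have : ∑ i, p * s i ^ (p - 1) * (r i - s i) = p * T := by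
        rw [hT_def, Finset.mul_sum]
        apply Finset.sum_congr rfl
        intro i _; ring
      rw [this, hTzero, hsum]
      ring
    have heach := (Finset.sum_eq_zero_iff_of_nonneg
      (fun i _ => by have := htan i; linarith)).mp hzero
    funext i
    by_contra hne
    have hlt := tangent_lt p (r i) (s i) hp (hr_nonneg i) (hs_nonneg i) hne
    have := heach i (Finset.mem_univ i)
    linarith
  · intro h
    rw [h]
end

section
/- For every integer k ≥ 2, the number of closed walks of length 2k in the cycle C_{2k+3}, which equals (2k+3)·binomial(2k,k), satisfies 2^{2k} < (2k+3)·binomial(2k,k)/2 − (2cos(π/(k+2)))^{2k}. -/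
open Real

lemma cos_pi_div_le (n : ℝ) (hn : (4:ℝ) ≤ n) :
    Real.cos (π / n) ≤ 1 - (3.141592 / n)^2 / 2 + (3.141593 / n)^4 * (5/96) := by
  have hπl := Real.pi_gt_d6
  have hπu := Real.pi_lt_d6
  have hn0 : (0:ℝ) < n := by linarith
  have hx0 : 0 ≤ π / n := div_nonneg (by linarith) hn0.le
  have hx1 : π / n ≤ 1 := by rw [div_le_one hn0]; linarith
  have hb := Real.cos_bound (x := π / n) (by rwa [abs_of_nonneg hx0])
  rw [abs_of_nonneg hx0] at hb
  have hb' := (abs_le.mp hb).2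
  have e1 : (3.141592 / n)^2 ≤ (π / n)^2 := by
    gcongr
  have e2 : (π / n)^4 ≤ (3.141593 / n)^4 := by
    gcongr
  nlinarith [e1, e2, hb']

lemma two_cos_nonneg (n : ℝ) (hn : (2:ℝ) ≤ n) : 0 ≤ 2 * Real.cos (π / n) := by
  have hπ := Real.pi_pos
  have hn0 : (0:ℝ) < n := by linarith
  have h1 : 0 ≤ π / n := by positivity
  have h2 : π / n ≤ π / 2 := by
    apply div_le_div_of_nonneg_left hπ.le (by norm_num)
    linarith
  have := Real.cos_nonneg_of_mem_Icc ⟨by linarith, h2⟩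
  linarith

lemma small_case (m : ℕ) (d : ℝ) (hn : (4:ℝ) ≤ (m:ℝ) + 2)
    (hd : 2 * (1 - (3.141592 / ((m:ℝ) + 2))^2 / 2 + (3.141593 / ((m:ℝ) + 2))^4 * (5/96)) ≤ d)
    (hnum : (2:ℝ)^(2*m) < ((2 * m + 3) * Nat.choose (2 * m) m : ℝ) / 2 - d^(2*m)) :
    (2 : ℝ) ^ (2 * m) <
      ((2 * m + 3) * Nat.choose (2 * m) m : ℝ) / 2
        - (2 * Real.cos (π / (m + 2))) ^ (2 * m) := by
  have hc := cos_pi_div_le ((m:ℝ) + 2) hn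
  have h0 := two_cos_nonneg ((m:ℝ) + 2) (by linarith)
  have h2 : (2 * Real.cos (π / ((m:ℝ) + 2)))^(2*m) ≤ d^(2*m) :=
    pow_le_pow_left₀ h0 (by linarith) _
  linarith

lemma four_pow_lt_walk : ∀ k : ℕ, 10 ≤ k →
    4 ^ (k + 1) < (2 * k + 3) * Nat.choose (2 * k) k := by
  intro k hk
  induction k, hk using Nat.le_induction with
  | base => norm_num [Nat.choose]
  | succ k hk ih =>
    have hcb : (k + 1) * Nat.centralBinom (k + 1) = 2 * (2 * k + 1) * Nat.centralBinom k :=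
      Nat.succ_mul_centralBinom_succ k
    have hdef : Nat.centralBinom k = Nat.choose (2 * k) k := rfl
    have hdef' : Nat.centralBinom (k + 1) = Nat.choose (2 * (k + 1)) (k + 1) := rfl
    have key : (k + 1) * 4 ^ (k + 1 + 1) < (k + 1) * ((2 * (k + 1) + 3) * Nat.choose (2 * (k + 1)) (k + 1)) := by
      calc (k + 1) * 4 ^ (k + 1 + 1) = 4 * (k + 1) * 4 ^ (k + 1) := by ring
        _ < 4 * (k + 1) * ((2 * k + 3) * Nat.choose (2 * k) k) := by
            exact (Nat.mul_lt_mul_left (by positivity)).mpr ih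
        _ ≤ (2 * (k + 1) + 3) * (2 * (2 * k + 1)) * Nat.choose (2 * k) k := by
            have hcoef : 4 * (k + 1) * (2 * k + 3) ≤ (2 * (k + 1) + 3) * (2 * (2 * k + 1)) := by nlinarith
            calc 4 * (k + 1) * ((2 * k + 3) * Nat.choose (2 * k) k)
                = 4 * (k + 1) * (2 * k + 3) * Nat.choose (2 * k) k := by ring
              _ ≤ (2 * (k + 1) + 3) * (2 * (2 * k + 1)) * Nat.choose (2 * k) k :=
                  Nat.mul_le_mul_right _ hcoef
        _ = (2 * (k + 1) + 3) * ((2 * (2 * k + 1)) * Nat.centralBinom k) := by rw [hdef]; ring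
        _ = (k + 1) * ((2 * (k + 1) + 3) * Nat.choose (2 * (k + 1)) (k + 1)) := by
            rw [← hdef', ← hcb]; ring
    exact Nat.lt_of_mul_lt_mul_left key

/-- For every integer `k ≥ 2`, the number `(2k+3)·C(2k,k)` of closed walks of length `2k`
in the cycle `C_{2k+3}` satisfies `2^{2k} < (2k+3)·C(2k,k)/2 − (2cos(π/(k+2)))^{2k}`. -/
theorem closed_walk_count_ineq (k : ℕ) (hk : 2 ≤ k) :
    (2 : ℝ) ^ (2 * k) <
      ((2 * k + 3) * Nat.choose (2 * k) k : ℝ) / 2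
        - (2 * Real.cos (π / (k + 2))) ^ (2 * k) := by
  rcases lt_or_ge k 10 with h | h
  · interval_cases k
    · exact small_case 2 1.424 (by norm_num) (by norm_num) (by norm_num [Nat.choose])
    · exact small_case 3 1.622 (by norm_num) (by norm_num) (by norm_num [Nat.choose])
    · exact small_case 4 1.74 (by norm_num) (by norm_num) (by norm_num [Nat.choose])
    · exact small_case 5 1.81 (by norm_num) (by norm_num) (by norm_num [Nat.choose])
    · exact small_case 6 1.85 (by norm_num) (by norm_num) (by norm_num [Nat.choose])
    · exact small_case 7 1.88 (by norm_num) (by norm_num) (by norm_num [Nat.choose])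
    · exact small_case 8 1.91 (by norm_num) (by norm_num) (by norm_num [Nat.choose])
    · exact small_case 9 1.92 (by norm_num) (by norm_num) (by norm_num [Nat.choose])
  · have hw : (4:ℝ) ^ (k + 1) < ((2 * k + 3) * Nat.choose (2 * k) k : ℝ) := by
      exact_mod_cast four_pow_lt_walk k h
    have h0 : 0 ≤ 2 * Real.cos (π / ((k:ℝ) + 2)) := two_cos_nonneg _ (by norm_num)
    have h1 : 2 * Real.cos (π / ((k:ℝ) + 2)) ≤ 2 := by
      nlinarith [Real.cos_le_one (π / ((k:ℝ) + 2))]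
    have h2 : (2 * Real.cos (π / ((k:ℝ) + 2))) ^ (2 * k) ≤ (2:ℝ) ^ (2 * k) :=
      pow_le_pow_left₀ h0 h1 _
    have h3 : (4:ℝ) ^ (k + 1) = 2 * (2:ℝ) ^ (2 * k) * 2 := by
      rw [pow_mul]; norm_num; ring
    linarith
end

section
/- Let k be a positive integer and let G be a graph on n ≥ 2k+1 vertices that contains no odd cycle of length at most 2k+1 (i.e., G is {C_3, C_5, ..., C_{2k+1}}-free). Then λ_1^{2k} + λ_2^{2k} ≤ Tr(A(G)^{2k})/2, where λ_1 and λ_2 are the largest and second largest eigenvalues of the adjacency matrix A(G). -/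
open Finset Matrix

set_option maxHeartbeats 1000000

/-- A graph is `{C_3, C_5, …, C_{2k+1}}`-free: it contains no odd cycle of
length at most `2k+1`. -/
def OddCycleFreeUpTo {V : Type*} (G : SimpleGraph V) (k : ℕ) : Prop :=
  ∀ (v : V) (w : G.Walk v v), w.IsCycle → Odd w.length → 2 * k + 1 < w.length

section AbstractInequality


private lemma chord_aux (k : ℕ) {a b t : ℝ} (hb0 : 0 ≤ b) (hbt : b ≤ t) (hta : t ≤ a) :
    (b ^ (2*k) * a - b ^ (2*k+1)) * (a ^ (2*k+1) - t ^ (2*k+1))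
      ≤ (t ^ (2*k) * a - t ^ (2*k+1)) * (a ^ (2*k+1) - b ^ (2*k+1)) := by
  have hgb := geom_sum₂_mul a b (2*k+1)
  have hgt := geom_sum₂_mul a t (2*k+1)
  have hsum : t ^ (2*k) * (∑ i ∈ range (2*k+1), a ^ i * b ^ (2*k+1-1-i))
      - b ^ (2*k) * (∑ i ∈ range (2*k+1), a ^ i * t ^ (2*k+1-1-i))
      = ∑ i ∈ range (2*k+1), a ^ i * (b ^ (2*k-i) * (t ^ (2*k-i) * (t ^ i - b ^ i))) := by
    rw [Finset.mul_sum, Finset.mul_sum, ← Finset.sum_sub_distrib]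
    refine Finset.sum_congr rfl fun i hi => ?_
    have hi' : i ≤ 2*k := by simpa [Nat.lt_succ_iff] using Finset.mem_range.mp hi
    have h1 : (2*k+1-1-i) = 2*k - i := by omega
    have h2 : t ^ (2*k) = t ^ (2*k - i) * t ^ i := by
      rw [← pow_add, Nat.sub_add_cancel hi']
    have h3 : b ^ (2*k) = b ^ (2*k - i) * b ^ i := by
      rw [← pow_add, Nat.sub_add_cancel hi']
    rw [h1, h2, h3]; ring
  have hnn : 0 ≤ ∑ i ∈ range (2*k+1), a ^ i * (b ^ (2*k-i) * (t ^ (2*k-i) * (t ^ i - b ^ i))) := by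
    refine Finset.sum_nonneg fun i _ => ?_
    have ha0 : (0:ℝ) ≤ a := le_trans hb0 (le_trans hbt hta)
    have ht0 : (0:ℝ) ≤ t := le_trans hb0 hbt
    have hib : b ^ i ≤ t ^ i := pow_le_pow_left₀ hb0 hbt i
    exact mul_nonneg (pow_nonneg ha0 _) (mul_nonneg (pow_nonneg hb0 _)
      (mul_nonneg (pow_nonneg ht0 _) (sub_nonneg.2 hib)))
  have hfac : (t ^ (2*k) * a - t ^ (2*k+1)) * (a ^ (2*k+1) - b ^ (2*k+1))
      - (b ^ (2*k) * a - b ^ (2*k+1)) * (a ^ (2*k+1) - t ^ (2*k+1))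
      = (a - b) * ((a - t) * (t ^ (2*k) * (∑ i ∈ range (2*k+1), a ^ i * b ^ (2*k+1-1-i))
        - b ^ (2*k) * (∑ i ∈ range (2*k+1), a ^ i * t ^ (2*k+1-1-i)))) := by
    rw [← hgb, ← hgt]; ring
  rw [hsum] at hfac
  nlinarith [mul_nonneg (sub_nonneg.2 (hbt.trans hta)) (mul_nonneg (sub_nonneg.2 hta) hnn)]

/-- If a family of reals in `[0,a]` has `(2k+1)`-power sum at least
`a^(2k+1)+b^(2k+1)` (with `0 ≤ b ≤ a`), then its `2k`-power sum is at least
`a^(2k)+b^(2k)`. -/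
private lemma lemW (k : ℕ) (hk : 1 ≤ k) {ι : Type*} (s : Finset ι) (f : ι → ℝ) (a b : ℝ)
    (hb0 : 0 ≤ b) (hba : b ≤ a)
    (hf0 : ∀ i ∈ s, 0 ≤ f i) (hfa : ∀ i ∈ s, f i ≤ a)
    (hsum : a ^ (2*k+1) + b ^ (2*k+1) ≤ ∑ i ∈ s, f i ^ (2*k+1)) :
    a ^ (2*k) + b ^ (2*k) ≤ ∑ i ∈ s, f i ^ (2*k) := by
  classical
  have ha0 : 0 ≤ a := hb0.trans hba
  rcases ha0.eq_or_lt with ha | ha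
  · -- a = 0
    have hbz : b = 0 := le_antisymm (hba.trans ha.ge) hb0
    have hz : (0:ℝ) ^ (2*k) = 0 := zero_pow (by omega)
    rw [← ha, hbz, hz]
    have := Finset.sum_nonneg (fun i hi => pow_nonneg (hf0 i hi) (2*k))
    linarith
  -- a > 0
  have hdiva : ∑ i ∈ s, f i ^ (2*k+1) ≤ a * ∑ i ∈ s, f i ^ (2*k) := by
    rw [Finset.mul_sum]
    refine Finset.sum_le_sum fun i hi => ?_
    have h0 := pow_nonneg (hf0 i hi) (2*k)
    calc f i ^ (2*k+1) = f i ^ (2*k) * f i := by ring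
    _ ≤ f i ^ (2*k) * a := by nlinarith [hfa i hi]
    _ = a * f i ^ (2*k) := by ring
  rcases hb0.eq_or_lt with hb | hb
  · -- b = 0
    have hbp : b ^ (2*k+1) = 0 := by rw [← hb]; exact zero_pow (by omega)
    have hbp2 : b ^ (2*k) = 0 := by rw [← hb]; exact zero_pow (by omega)
    rw [hbp2, add_zero]
    rw [hbp, add_zero] at hsum
    have h2 : a * a ^ (2*k) ≤ a * ∑ i ∈ s, f i ^ (2*k) := by
      calc a * a ^ (2*k) = a ^ (2*k+1) := by ring
      _ ≤ _ := hsum.trans hdiva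
    exact le_of_mul_le_mul_left h2 ha
  -- 0 < b
  set B := s.filter (fun i => b < f i) with hB
  set C := s.filter (fun i => ¬ b < f i) with hC
  have hsplit21 : ∑ i ∈ B, f i ^ (2*k+1) + ∑ i ∈ C, f i ^ (2*k+1) = ∑ i ∈ s, f i ^ (2*k+1) :=
    Finset.sum_filter_add_sum_filter_not s _ _
  have hsplit20 : ∑ i ∈ B, f i ^ (2*k) + ∑ i ∈ C, f i ^ (2*k) = ∑ i ∈ s, f i ^ (2*k) :=
    Finset.sum_filter_add_sum_filter_not s _ _
  have hCb : ∀ i ∈ C, f i ≤ b := fun i hi => not_lt.mp (Finset.mem_filter.mp hi).2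
  have hCs : ∀ i ∈ C, i ∈ s := fun i hi => (Finset.mem_filter.mp hi).1
  have hBs : ∀ i ∈ B, i ∈ s := fun i hi => (Finset.mem_filter.mp hi).1
  have hBb : ∀ i ∈ B, b < f i := fun i hi => (Finset.mem_filter.mp hi).2
  have hSBnn : 0 ≤ ∑ i ∈ B, f i ^ (2*k) :=
    Finset.sum_nonneg fun i hi => pow_nonneg (hf0 i (hBs i hi)) _
  have hSCnn : 0 ≤ ∑ i ∈ C, f i ^ (2*k) :=
    Finset.sum_nonneg fun i hi => pow_nonneg (hf0 i (hCs i hi)) _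
  by_cases hc1 : b ^ (2*k+1) ≤ ∑ i ∈ C, f i ^ (2*k+1)
  · -- Case 1 : the small atoms already carry the `b`-budget
    have hPa : ∑ i ∈ B, f i ^ (2*k+1) ≤ a * ∑ i ∈ B, f i ^ (2*k) := by
      rw [Finset.mul_sum]
      refine Finset.sum_le_sum fun i hi => ?_
      have h0 := pow_nonneg (hf0 i (hBs i hi)) (2*k)
      calc f i ^ (2*k+1) = f i ^ (2*k) * f i := by ring
      _ ≤ f i ^ (2*k) * a := by nlinarith [hfa i (hBs i hi)]
      _ = a * f i ^ (2*k) := by ring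
    have hQb : ∑ i ∈ C, f i ^ (2*k+1) ≤ b * ∑ i ∈ C, f i ^ (2*k) := by
      rw [Finset.mul_sum]
      refine Finset.sum_le_sum fun i hi => ?_
      have h0 := pow_nonneg (hf0 i (hCs i hi)) (2*k)
      calc f i ^ (2*k+1) = f i ^ (2*k) * f i := by ring
      _ ≤ f i ^ (2*k) * b := by nlinarith [hCb i hi]
      _ = b * f i ^ (2*k) := by ring
    set P := ∑ i ∈ B, f i ^ (2*k+1) with hPdef
    set Q := ∑ i ∈ C, f i ^ (2*k+1) with hQdef
    set SB := ∑ i ∈ B, f i ^ (2*k) with hSBdef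
    set SC := ∑ i ∈ C, f i ^ (2*k) with hSCdef
    have h1 : 0 ≤ (a - b) * (Q - b ^ (2*k+1)) :=
      mul_nonneg (sub_nonneg.2 hba) (sub_nonneg.2 hc1)
    have h2 : 0 ≤ (P + Q - (a ^ (2*k+1) + b ^ (2*k+1))) * b := by
      have hs' : a ^ (2*k+1) + b ^ (2*k+1) ≤ P + Q := by rw [hsplit21]; exact hsum
      nlinarith
    have h3 : P * b ≤ a * SB * b := by nlinarith [hPa]
    have h4 : Q * a ≤ b * SC * a := by nlinarith [hQb]
    have e1 : a * b * (a ^ (2*k) + b ^ (2*k)) = b * a ^ (2*k+1) + a * b ^ (2*k+1) := by ring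
    have hkey : a * b * (a ^ (2*k) + b ^ (2*k)) ≤ a * b * (SB + SC) := by
      rw [e1]; nlinarith [h1, h2, h3, h4]
    have hfin := le_of_mul_le_mul_left hkey (by positivity : (0:ℝ) < a * b)
    linarith [hsplit20, hfin]
  · -- Case 2 : the big atoms carry more than `a^(2k+1)`
    push_neg at hc1
    have hPgt : a ^ (2*k+1) < ∑ i ∈ B, f i ^ (2*k+1) := by nlinarith [hsplit21]
    have hBcard : 1 < B.card := by
      by_contra hcard
      push_neg at hcard
      have hle : ∑ i ∈ B, f i ^ (2*k+1) ≤ a ^ (2*k+1) := by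
        have hap : (0:ℝ) ≤ a ^ (2*k+1) := pow_nonneg ha0 _
        calc ∑ i ∈ B, f i ^ (2*k+1) ≤ ∑ i ∈ B, a ^ (2*k+1) := by
              refine Finset.sum_le_sum fun i hi => ?_
              exact pow_le_pow_left₀ (hf0 i (hBs i hi)) (hfa i (hBs i hi)) _
        _ = (B.card : ℝ) * a ^ (2*k+1) := by rw [Finset.sum_const, nsmul_eq_mul]
        _ ≤ 1 * a ^ (2*k+1) := by
              have hc : (B.card : ℝ) ≤ 1 := by exact_mod_cast hcard
              exact mul_le_mul_of_nonneg_right hc hap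
        _ = a ^ (2*k+1) := one_mul _
      linarith
    obtain ⟨j1, hj1, j2, hj2, hjne⟩ := Finset.one_lt_card.mp hBcard
    have hx1 : b < f j1 := hBb j1 hj1
    have hx2 : b < f j2 := hBb j2 hj2
    have hxa1 : f j1 ≤ a := hfa j1 (hBs j1 hj1)
    have hxa2 : f j2 ≤ a := hfa j2 (hBs j2 hj2)
    have hblta : b < a := lt_of_lt_of_le hx1 hxa1
    have hT : 0 < a ^ (2*k+1) - b ^ (2*k+1) := by
      have := pow_lt_pow_left₀ hblta hb0 (by omega : 2*k+1 ≠ 0)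
      linarith
    have hch1 := chord_aux k hb0 hx1.le hxa1
    have hch2 := chord_aux k hb0 hx2.le hxa2
    have hpairsub : {j1, j2} ⊆ s := by
      intro x hx
      rcases Finset.mem_insert.mp hx with rfl | hx
      · exact hBs _ hj1
      · exact hBs _ (Finset.mem_singleton.mp hx ▸ hj2)
    have hpair20 : f j1 ^ (2*k) + f j2 ^ (2*k) ≤ ∑ i ∈ s, f i ^ (2*k) := by
      have := Finset.sum_le_sum_of_subset_of_nonneg hpairsub
        (fun i hi _ => pow_nonneg (hf0 i hi) (2*k))
      rwa [Finset.sum_pair hjne] at this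
    by_cases hc2a : a ^ (2*k+1) + b ^ (2*k+1) ≤ f j1 ^ (2*k+1) + f j2 ^ (2*k+1)
    · -- the two big atoms alone suffice (power-mean step)
      have hpow : b ^ (2*k) ≤ a ^ (2*k) := pow_le_pow_left₀ hb0 hba _
      have h' : 0 ≤ a * (a ^ (2*k) - b ^ (2*k)) := mul_nonneg ha0 (sub_nonneg.2 hpow)
      have hE : 0 ≤ (f j1 ^ (2*k+1) + f j2 ^ (2*k+1) - (a ^ (2*k+1) + b ^ (2*k+1)))
          * (a * (a ^ (2*k) - b ^ (2*k))) := mul_nonneg (sub_nonneg.2 hc2a) h'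
      have hid : a * (a ^ (2*k+1) - b ^ (2*k+1)) * (f j1 ^ (2*k) + f j2 ^ (2*k))
          - a * (a ^ (2*k+1) - b ^ (2*k+1)) * (a ^ (2*k) + b ^ (2*k))
          = ((f j1 ^ (2*k) * a - f j1 ^ (2*k+1)) * (a ^ (2*k+1) - b ^ (2*k+1))
              - (b ^ (2*k) * a - b ^ (2*k+1)) * (a ^ (2*k+1) - f j1 ^ (2*k+1)))
          + ((f j2 ^ (2*k) * a - f j2 ^ (2*k+1)) * (a ^ (2*k+1) - b ^ (2*k+1))
              - (b ^ (2*k) * a - b ^ (2*k+1)) * (a ^ (2*k+1) - f j2 ^ (2*k+1)))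
          + (f j1 ^ (2*k+1) + f j2 ^ (2*k+1) - (a ^ (2*k+1) + b ^ (2*k+1)))
              * (a * (a ^ (2*k) - b ^ (2*k))) := by ring
      have hgoal2 : a * (a ^ (2*k+1) - b ^ (2*k+1)) * (a ^ (2*k) + b ^ (2*k))
          ≤ a * (a ^ (2*k+1) - b ^ (2*k+1)) * (f j1 ^ (2*k) + f j2 ^ (2*k)) := by
        linarith [hch1, hch2, hE, hid]
      have := le_of_mul_le_mul_left hgoal2
        (by positivity : (0:ℝ) < a * (a ^ (2*k+1) - b ^ (2*k+1)))
      linarith [hpair20]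
    · -- chord step
      push_neg at hc2a
      have hsplitg : ∑ i ∈ s, (a * f i ^ (2*k) - f i ^ (2*k+1))
          = a * ∑ i ∈ s, f i ^ (2*k) - ∑ i ∈ s, f i ^ (2*k+1) := by
        rw [Finset.sum_sub_distrib, Finset.mul_sum]
      have hgpair : (a * f j1 ^ (2*k) - f j1 ^ (2*k+1)) + (a * f j2 ^ (2*k) - f j2 ^ (2*k+1))
          ≤ ∑ i ∈ s, (a * f i ^ (2*k) - f i ^ (2*k+1)) := by
        have hterm : ∀ i ∈ s, 0 ≤ a * f i ^ (2*k) - f i ^ (2*k+1) := by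
          intro i hi
          have h0 := pow_nonneg (hf0 i hi) (2*k)
          have h1 : f i ^ (2*k+1) ≤ a * f i ^ (2*k) := by
            calc f i ^ (2*k+1) = f i ^ (2*k) * f i := by ring
            _ ≤ f i ^ (2*k) * a := mul_le_mul_of_nonneg_left (hfa i hi) h0
            _ = a * f i ^ (2*k) := mul_comm _ _
          linarith
        have := Finset.sum_le_sum_of_subset_of_nonneg hpairsub
          (fun i hi _ => hterm i hi)
        rwa [Finset.sum_pair hjne] at this
      have hGb0 : 0 ≤ b ^ (2*k) * a - b ^ (2*k+1) := by
        have h0 := pow_nonneg hb0 (2*k)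
        have h1 : b ^ (2*k+1) ≤ b ^ (2*k) * a := by
          calc b ^ (2*k+1) = b ^ (2*k) * b := by ring
          _ ≤ b ^ (2*k) * a := mul_le_mul_of_nonneg_left hba h0
        linarith
      have h6 : 0 ≤ (b ^ (2*k) * a - b ^ (2*k+1))
          * (a ^ (2*k+1) + b ^ (2*k+1) - (f j1 ^ (2*k+1) + f j2 ^ (2*k+1))) :=
        mul_nonneg hGb0 (by linarith)
      have hgb2 : (b ^ (2*k) * a - b ^ (2*k+1)) * (a ^ (2*k+1) - b ^ (2*k+1))
          ≤ ((a * f j1 ^ (2*k) - f j1 ^ (2*k+1)) + (a * f j2 ^ (2*k) - f j2 ^ (2*k+1)))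
            * (a ^ (2*k+1) - b ^ (2*k+1)) := by
        linarith [hch1, hch2, h6]
      have hgb3 : b ^ (2*k) * a - b ^ (2*k+1)
          ≤ (a * f j1 ^ (2*k) - f j1 ^ (2*k+1)) + (a * f j2 ^ (2*k) - f j2 ^ (2*k+1)) :=
        le_of_mul_le_mul_right hgb2 hT
      have h5 : b ^ (2*k) * a - b ^ (2*k+1)
          ≤ a * ∑ i ∈ s, f i ^ (2*k) - ∑ i ∈ s, f i ^ (2*k+1) := by
        rw [← hsplitg]; linarith [hgb3, hgpair]
      have hfin : a * (a ^ (2*k) + b ^ (2*k)) ≤ a * ∑ i ∈ s, f i ^ (2*k) := by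
        have e : a * (a ^ (2*k) + b ^ (2*k))
            = (a ^ (2*k+1) + b ^ (2*k+1)) + (b ^ (2*k) * a - b ^ (2*k+1)) := by ring
        rw [e]; linarith [hsum, h5]
      exact le_of_mul_le_mul_left hfin ha

private lemma keyIneq (k : ℕ) (hk : 1 ≤ k) {ι : Type*} [Fintype ι] [DecidableEq ι]
    (f : ι → ℝ) (i0 i1 : ι) (hne : i0 ≠ i1) (hn3 : 3 ≤ Fintype.card ι)
    (hcap : ∀ i, |f i| ≤ f i0)
    (hb : ∀ i, i ≠ i0 → f i ≤ f i1)
    (hp1 : ∑ i, f i = 0)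
    (hpk : ∑ i, f i ^ (2*k+1) = 0) :
    2 * f i0 ^ (2*k) + 2 * f i1 ^ (2*k) ≤ ∑ i, f i ^ (2*k) := by
  classical
  have hodd : Odd (2*k+1) := ⟨k, by ring⟩
  have heven : Even (2*k) := ⟨k, by ring⟩
  have ha0 : 0 ≤ f i0 := (abs_nonneg (f i0)).trans (hcap i0)
  have hba : f i1 ≤ f i0 := le_trans (le_abs_self _) (hcap i1)
  rcases ha0.eq_or_lt with haz | ha
  · -- f i0 = 0 hence everything is 0
    have hz : ∀ i, f i = 0 := by
      intro i
      have := hcap i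
      rw [← haz] at this
      exact abs_eq_zero.mp (le_antisymm this (abs_nonneg _))
    simp [hz, zero_pow (show 2*k ≠ 0 by omega)]
  by_cases hbneg : f i1 < 0
  · -- second largest negative
    set S := Finset.univ.erase i0 with hSdef
    have hfS : ∀ i ∈ S, f i ≤ f i1 := fun i hi => hb i (Finset.ne_of_mem_erase hi)
    have hmpos : ∀ i ∈ S, 0 < -f i := fun i hi => by linarith [hfS i hi]
    have hma : ∀ i ∈ S, -f i ≤ f i0 := fun i hi => by
      have := (abs_le.mp (hcap i)).1; linarith
    have hSsum : ∑ i ∈ S, (-f i) = f i0 := by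
      have h := Finset.sum_erase_add Finset.univ f (Finset.mem_univ i0)
      rw [hp1] at h
      rw [Finset.sum_neg_distrib]
      linarith [h]
    have hSsum21 : ∑ i ∈ S, (-f i) ^ (2*k+1) = f i0 ^ (2*k+1) := by
      have h := Finset.sum_erase_add Finset.univ (fun i => f i ^ (2*k+1)) (Finset.mem_univ i0)
      rw [hpk] at h
      have : ∑ i ∈ S, (-f i) ^ (2*k+1) = -∑ i ∈ S, f i ^ (2*k+1) := by
        rw [← Finset.sum_neg_distrib]
        exact Finset.sum_congr rfl fun i _ => hodd.neg_pow (f i)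
      rw [this]; linarith [h]
    have hScardEq : S.card = Fintype.card ι - 1 := by
      rw [hSdef, Finset.card_erase_of_mem (Finset.mem_univ i0), Finset.card_univ]
    have hScard : 2 ≤ S.card := by omega
    have hi1S : i1 ∈ S := Finset.mem_erase.mpr ⟨(Ne.symm hne), Finset.mem_univ _⟩
    by_cases hS3 : 3 ≤ S.card
    · -- at least three atoms below i0
      have hj2ex : ((S.erase i1)).Nonempty := by
        apply Finset.card_pos.mp
        have h9 := Finset.card_erase_of_mem hi1S
        omega
      obtain ⟨j2, hj2⟩ := hj2ex
      have hj2S : j2 ∈ S := Finset.mem_of_mem_erase hj2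
      set R := (S.erase i1).erase j2 with hRdef
      have hRne : R.Nonempty := by
        rw [hRdef]
        apply Finset.card_pos.mp
        have h1 := Finset.card_erase_of_mem hi1S
        have h2 := Finset.card_erase_of_mem hj2
        omega
      have hdecomp : ∀ g : ι → ℝ, ∑ i ∈ R, g i + g j2 + g i1 = ∑ i ∈ S, g i := by
        intro g
        rw [Finset.sum_erase_add (S.erase i1) g hj2, Finset.sum_erase_add S g hi1S]
      have hRS : ∀ i ∈ R, i ∈ S := fun i hi =>
        Finset.mem_of_mem_erase (Finset.mem_of_mem_erase hi)
      have hDpos : 0 < ∑ i ∈ R, (-f i) :=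
        Finset.sum_pos (fun i hi => hmpos i (hRS i hi)) hRne
      have hDval : ∑ i ∈ R, (-f i) = f i0 - (-f j2) - (-f i1) := by
        have := hdecomp (fun i => -f i)
        rw [hSsum] at this
        linarith
      have hjD : ∀ j ∈ R, -f j ≤ ∑ i ∈ R, (-f i) :=
        fun j hj => Finset.single_le_sum (fun i hi => (hmpos i (hRS i hi)).le) hj
      have hR21 : ∑ i ∈ R, (-f i) ^ (2*k+1)
          = f i0 ^ (2*k+1) - (-f j2) ^ (2*k+1) - (-f i1) ^ (2*k+1) := by
        have := hdecomp (fun i => (-f i) ^ (2*k+1))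
        rw [hSsum21] at this
        linarith
      have hRdiv : ∑ i ∈ R, (-f i) ^ (2*k+1)
          ≤ (∑ i ∈ R, (-f i)) * ∑ i ∈ R, (-f i) ^ (2*k) := by
        rw [Finset.sum_mul_sum]
        calc ∑ i ∈ R, (-f i) ^ (2*k+1)
            = ∑ i ∈ R, (-f i) * (-f i) ^ (2*k) :=
              Finset.sum_congr rfl fun i _ => by ring
        _ ≤ ∑ i ∈ R, (∑ j ∈ R, (-f j)) * (-f i) ^ (2*k) := by
              refine Finset.sum_le_sum fun i hi => ?_
              have h1 : 0 ≤ (-f i) ^ (2*k) := pow_nonneg (hmpos i (hRS i hi)).le _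
              exact mul_le_mul_of_nonneg_right (hjD i hi) h1
        _ = ∑ i ∈ R, ∑ j ∈ R, (-f j) * (-f i) ^ (2*k) := by
              refine Finset.sum_congr rfl fun i _ => ?_
              rw [Finset.sum_mul]
        _ = ∑ i ∈ R, ∑ j ∈ R, (-f i) * (-f j) ^ (2*k) := by
              rw [Finset.sum_comm]
      -- lower bound for the R-part
      have hxa : -f i1 ≤ f i0 := hma i1 hi1S
      have hya : -f j2 ≤ f i0 := hma j2 hj2S
      have hx0 : 0 < -f i1 := hmpos i1 hi1S
      have hy0 : 0 < -f j2 := hmpos j2 hj2S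
      have hclaim : f i0 ^ (2*k) * (∑ i ∈ R, (-f i)) ≤ ∑ i ∈ R, (-f i) ^ (2*k+1) := by
        rw [hR21, hDval]
        have h1 : (-f i1) ^ (2*k+1) ≤ f i0 ^ (2*k) * (-f i1) := by
          calc (-f i1) ^ (2*k+1) = (-f i1) ^ (2*k) * (-f i1) := by ring
          _ ≤ f i0 ^ (2*k) * (-f i1) :=
              mul_le_mul_of_nonneg_right (pow_le_pow_left₀ hx0.le hxa _) hx0.le
        have h2 : (-f j2) ^ (2*k+1) ≤ f i0 ^ (2*k) * (-f j2) := by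
          calc (-f j2) ^ (2*k+1) = (-f j2) ^ (2*k) * (-f j2) := by ring
          _ ≤ f i0 ^ (2*k) * (-f j2) :=
              mul_le_mul_of_nonneg_right (pow_le_pow_left₀ hy0.le hya _) hy0.le
        have e : f i0 ^ (2*k) * (f i0 - -f j2 - -f i1)
            = f i0 ^ (2*k+1) - f i0 ^ (2*k) * (-f j2) - f i0 ^ (2*k) * (-f i1) := by ring
        rw [e]
        linarith [h1, h2]
      have hR20 : f i0 ^ (2*k) ≤ ∑ i ∈ R, (-f i) ^ (2*k) := by
        have := hclaim.trans hRdiv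
        have h' : (∑ i ∈ R, (-f i)) * f i0 ^ (2*k)
            ≤ (∑ i ∈ R, (-f i)) * ∑ i ∈ R, (-f i) ^ (2*k) := by
          calc (∑ i ∈ R, (-f i)) * f i0 ^ (2*k) = f i0 ^ (2*k) * (∑ i ∈ R, (-f i)) := by ring
          _ ≤ _ := this
        exact le_of_mul_le_mul_left h' hDpos
      -- assemble
      have hbpow : ∀ i ∈ S, f i1 ^ (2*k) ≤ (-f i) ^ (2*k) := by
        intro i hi
        have h1 : (-f i1) ^ (2*k) ≤ (-f i) ^ (2*k) :=
          pow_le_pow_left₀ (by linarith) (by linarith [hfS i hi]) _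
        calc f i1 ^ (2*k) = (-f i1) ^ (2*k) := (heven.neg_pow _).symm
        _ ≤ _ := h1
      have hS20 : f i0 ^ (2*k) + 2 * f i1 ^ (2*k) ≤ ∑ i ∈ S, (-f i) ^ (2*k) := by
        have := hdecomp (fun i => (-f i) ^ (2*k))
        have hb1 := hbpow i1 hi1S
        have hb2 := hbpow j2 hj2S
        linarith [hR20]
      have hfinal : ∑ i, f i ^ (2*k) = f i0 ^ (2*k) + ∑ i ∈ S, (-f i) ^ (2*k) := by
        have h := Finset.sum_erase_add Finset.univ (fun i => f i ^ (2*k)) (Finset.mem_univ i0)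
        have he : ∑ i ∈ S, f i ^ (2*k) = ∑ i ∈ S, (-f i) ^ (2*k) :=
          Finset.sum_congr rfl fun i _ => (heven.neg_pow (f i)).symm
        rw [← h, ← hSdef, he]
        ring
      rw [hfinal]
      linarith [hS20]
    · -- S has exactly two elements : impossible
      exfalso
      have hcard2 : S.card = 2 := by omega
      obtain ⟨u, v, huv, hSeq⟩ := Finset.card_eq_two.mp hcard2
      have huS : u ∈ S := by rw [hSeq]; simp
      have hvS : v ∈ S := by rw [hSeq]; simp
      have hsum2 : (-f u) + (-f v) = f i0 := by
        rw [← hSsum, hSeq, Finset.sum_pair huv]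
      have hsum2' : (-f u) ^ (2*k+1) + (-f v) ^ (2*k+1) = f i0 ^ (2*k+1) := by
        rw [← hSsum21, hSeq, Finset.sum_pair huv]
      have hu0 : 0 < -f u := hmpos u huS
      have hv0 : 0 < -f v := hmpos v hvS
      have h1 : (-f u) ^ (2*k+1) ≤ (-f u) * ((-f u) + (-f v)) ^ (2*k) := by
        calc (-f u) ^ (2*k+1) = (-f u) * (-f u) ^ (2*k) := by ring
        _ ≤ (-f u) * ((-f u) + (-f v)) ^ (2*k) :=
            mul_le_mul_of_nonneg_left
              (pow_le_pow_left₀ hu0.le (by linarith) _) hu0.le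
      have h2 : (-f v) ^ (2*k+1) < (-f v) * ((-f u) + (-f v)) ^ (2*k) := by
        calc (-f v) ^ (2*k+1) = (-f v) * (-f v) ^ (2*k) := by ring
        _ < (-f v) * ((-f u) + (-f v)) ^ (2*k) := by
            refine mul_lt_mul_of_pos_left ?_ hv0
            exact pow_lt_pow_left₀ (by linarith) hv0.le (by omega)
      have h3 : (-f u) * ((-f u) + (-f v)) ^ (2*k) + (-f v) * ((-f u) + (-f v)) ^ (2*k)
          = ((-f u) + (-f v)) ^ (2*k+1) := by ring
      have h4 : (-f u) ^ (2*k+1) + (-f v) ^ (2*k+1) < ((-f u) + (-f v)) ^ (2*k+1) := by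
        linarith [h1, h2, h3]
      rw [hsum2, hsum2'] at h4
      exact lt_irrefl _ h4
  · -- f i1 ≥ 0 : use Lemma W on the negative part
    push_neg at hbneg
    set S := Finset.univ.filter (fun i => f i < 0) with hSdef
    set C := Finset.univ.filter (fun i => ¬ f i < 0) with hCdef
    have hsplit : ∀ g : ι → ℝ, ∑ i ∈ S, g i + ∑ i ∈ C, g i = ∑ i, g i := fun g =>
      Finset.sum_filter_add_sum_filter_not Finset.univ _ g
    have hpairC : {i0, i1} ⊆ C := by
      intro x hx
      rcases Finset.mem_insert.mp hx with rfl | hx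
      · exact Finset.mem_filter.mpr ⟨Finset.mem_univ _, by linarith⟩
      · rw [Finset.mem_singleton.mp hx]
        exact Finset.mem_filter.mpr ⟨Finset.mem_univ _, by linarith⟩
    have hCnn : ∀ i ∈ C, 0 ≤ f i := fun i hi => by
      have := (Finset.mem_filter.mp hi).2; linarith [not_lt.mp this]
    have hsum21 : f i0 ^ (2*k+1) + f i1 ^ (2*k+1) ≤ ∑ i ∈ S, (-f i) ^ (2*k+1) := by
      have h1 : ∑ i ∈ S, (-f i) ^ (2*k+1) = -∑ i ∈ S, f i ^ (2*k+1) := by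
        rw [← Finset.sum_neg_distrib]
        exact Finset.sum_congr rfl fun i _ => hodd.neg_pow (f i)
      have h2 := hsplit (fun i => f i ^ (2*k+1))
      rw [hpk] at h2
      have h3 : f i0 ^ (2*k+1) + f i1 ^ (2*k+1) ≤ ∑ i ∈ C, f i ^ (2*k+1) := by
        have := Finset.sum_le_sum_of_subset_of_nonneg (f := fun i => f i ^ (2*k+1)) hpairC
          (fun i hi _ => pow_nonneg (hCnn i hi) _)
        rwa [Finset.sum_pair hne] at this
      linarith
    have hW := lemW k hk S (fun i => -f i) (f i0) (f i1) hbneg hba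
      (fun i hi => by
        show (0:ℝ) ≤ -f i
        have := (Finset.mem_filter.mp hi).2; linarith)
      (fun i hi => by
        show -f i ≤ f i0
        have := (abs_le.mp (hcap i)).1; linarith)
      hsum21
    have hC20 : f i0 ^ (2*k) + f i1 ^ (2*k) ≤ ∑ i ∈ C, f i ^ (2*k) := by
      have := Finset.sum_le_sum_of_subset_of_nonneg (f := fun i => f i ^ (2*k)) hpairC
        (fun i hi _ => pow_nonneg (hCnn i hi) _)
      rwa [Finset.sum_pair hne] at this
    have hS20 : ∑ i ∈ S, f i ^ (2*k) = ∑ i ∈ S, (-f i) ^ (2*k) :=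
      Finset.sum_congr rfl fun i _ => (heven.neg_pow (f i)).symm
    have h := hsplit (fun i => f i ^ (2*k))
    rw [hS20] at h
    linarith [hW, hC20, h]

end AbstractInequality

section Walks
open SimpleGraph Walk

private lemma edge_not_mem_path_edges {V : Type*} {G : SimpleGraph V} [DecidableEq V]
    {v v1 : V} (h : G.Adj v v1) (p : G.Walk v1 v) (hnd : p.support.Nodup)
    (hlen : 2 ≤ p.length) : s(v, v1) ∉ p.edges := by
  intro hmem
  cases p with
  | nil => simp at hmem
  | cons h2 q =>
    rename_i x
    -- h2 : G.Adj v1 x, q : G.Walk x v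
    rw [Walk.edges_cons, List.mem_cons] at hmem
    rcases hmem with heq | hmem
    · -- s(v,v1) = s(v1,x)
      rw [Sym2.eq_iff] at heq
      rcases heq with ⟨hvv1, -⟩ | ⟨hx, -⟩
      · exact G.ne_of_adj h hvv1
      · -- x = v, so q : G.Walk v v
        subst hx
        cases q with
        | nil => simp at hlen
        | cons h3 q3 =>
          -- support of (cons h2 (cons h3 q3)) has v twice
          have hv : v ∈ q3.support := Walk.end_mem_support q3
          rw [Walk.support_cons, Walk.support_cons] at hnd
          simp only [List.nodup_cons, List.mem_cons] at hnd
          exact hnd.2.1 hv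
    · -- s(v,v1) ∈ q.edges gives v1 ∈ q.support
      have hv1 : v1 ∈ q.support := Walk.snd_mem_support_of_mem_edges q hmem
      rw [Walk.support_cons] at hnd
      simp only [List.nodup_cons] at hnd
      exact hnd.1 hv1

private lemma no_short_odd_closed_walk {V : Type*} {G : SimpleGraph V} [DecidableEq V]
    {k : ℕ} (hfree : OddCycleFreeUpTo G k) :
    ∀ (L : ℕ), Odd L → L ≤ 2*k+1 → ∀ (v : V) (w : G.Walk v v), w.length ≠ L := by
  intro L
  induction L using Nat.strong_induction_on with
  | _ L ih =>
    intro hodd hle v w hlen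
    cases w with
    | nil =>
      simp only [Walk.length_nil] at hlen
      rw [← hlen] at hodd
      simp [Nat.odd_iff] at hodd
    | cons h p =>
      rename_i v1
      -- h : G.Adj v v1, p : G.Walk v1 v
      by_cases hnd : p.support.Nodup
      · -- it is a cycle (or a degenerate loop)
        have hL1 : p.length + 1 = L := by simpa using hlen
        by_cases hL3 : 3 ≤ L
        · have hcyc : (Walk.cons h p).IsCycle := by
            rw [Walk.cons_isCycle_iff]
            exact ⟨(Walk.isPath_def p).mpr hnd,
              edge_not_mem_path_edges h p hnd (by omega)⟩
          have := hfree v (Walk.cons h p) hcyc (by rw [hlen]; exact hodd)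
          rw [hlen] at this
          omega
        · -- L = 1
          have hL1' : L = 1 := by
            have := Nat.odd_iff.mp hodd
            omega
          have hp0 : p.length = 0 := by omega
          have hveq : v1 = v := Walk.eq_of_length_eq_zero hp0
          subst hveq
          exact G.irrefl h
      · -- there is a repeated vertex in the support tail
        -- find a vertex with count ≥ 2 in w.support.tail = p.support
        rw [List.nodup_iff_count_le_one] at hnd
        push_neg at hnd
        obtain ⟨u, hu⟩ := hnd
        have hu2 : 2 ≤ (p.support).count u := hu
        have husup : u ∈ (Walk.cons h p).support := by
          rw [Walk.support_cons]
          exact List.mem_cons_of_mem _ (List.count_pos_iff.mp (by omega))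
        -- rotate the closed walk to put u at the base point
        set w' := (Walk.cons h p).rotate u husup with hw'def
        have hw'len : w'.length = L := by
          rw [hw'def, Walk.rotate]
          rw [Walk.length_append]
          have := congr_arg Walk.length ((Walk.cons h p).take_spec husup)
          rw [Walk.length_append] at this
          rw [← hlen]
          simp only [Walk.length_cons] at this ⊢
          omega
        have hw'count : 2 ≤ (w'.support.tail).count u := by
          have hrot := Walk.support_rotate (Walk.cons h p) u husup
          rw [← hw'def] at hrot
          rw [(List.IsRotated.perm hrot).count_eq]
          have : (Walk.cons h p).support.tail = p.support := by
            rw [Walk.support_cons]; rfl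
          rw [this]
          exact hu2
        -- now split w'
        cases hw'0 : w' with
        | nil =>
          rw [hw'0] at hw'len
          simp only [Walk.length_nil] at hw'len
          rw [← hw'len] at hodd
          simp [Nat.odd_iff] at hodd
        | cons hadj p' =>
          rename_i x
          -- hadj : G.Adj u x, p' : G.Walk x u
          have hcount' : 2 ≤ (p'.support).count u := by
            rw [hw'0] at hw'count
            rw [Walk.support_cons] at hw'count
            simpa using hw'count
          have huin : u ∈ p'.support := List.count_pos_iff.mp (by omega)
          set q := p'.takeUntil u huin with hqdef
          set r := p'.dropUntil u huin with hrdef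
          have hspec : q.append r = p' := p'.take_spec huin
          have hlensum : q.length + r.length = p'.length := by
            have := congr_arg Walk.length hspec
            rwa [Walk.length_append] at this
          have hcountq : (q.support).count u = 1 := p'.count_support_takeUntil_eq_one huin
          have hrne : 1 ≤ r.length := by
            by_contra hr0
            push_neg at hr0
            have hr00 : r.length = 0 := by omega
            have : r = Walk.nil := Walk.nil_iff_eq_nil.mp (Walk.length_eq_zero_iff.mp hr00)
            have hsupp : p'.support = q.support := by
              rw [← hspec, Walk.support_append, this]
              simp
            rw [hsupp, hcountq] at hcount'
            omega
          -- the two closed sub-walks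
          have hlenw' : p'.length + 1 = L := by
            rw [hw'0] at hw'len
            simpa using hw'len
          -- c1 := cons hadj q : G.Walk u u, c2 := r : G.Walk u u
          have hc1len : (Walk.cons hadj q).length = q.length + 1 := by simp
          -- one of the two lengths is odd
          have hoddor : Odd (q.length + 1) ∨ Odd r.length := by
            have : (q.length + 1) + r.length = L := by omega
            rcases Nat.even_or_odd (q.length + 1) with he | ho
            · right
              have := Nat.odd_iff.mp hodd
              rcases he with ⟨m, hm⟩
              rw [Nat.odd_iff]
              omega
            · left; exact ho
          rcases hoddor with hodd1 | hodd2
          · exact ih (q.length + 1) (by omega) hodd1 (by omega) u (Walk.cons hadj q)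
              (by simp)
          · have hrltL : r.length < L := by omega
            exact ih r.length hrltL hodd2 (by omega) u r rfl

end Walks

section Spectral

variable {V : Type*} [Fintype V] [DecidableEq V]

private lemma trace_pow_eq_sum_eig (A : Matrix V V ℝ) (hA : A.IsHermitian) (m : ℕ) :
    (A ^ m).trace = ∑ i, hA.eigenvalues i ^ m := by
  set U : Matrix V V ℝ := (hA.eigenvectorUnitary : Matrix V V ℝ) with hUdef
  set D : Matrix V V ℝ := Matrix.diagonal (RCLike.ofReal ∘ hA.eigenvalues) with hDdef
  have hU1 : U * star U = 1 := Matrix.mem_unitaryGroup_iff.mp (hA.eigenvectorUnitary).2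
  have hU2 : star U * U = 1 := Matrix.mem_unitaryGroup_iff'.mp (hA.eigenvectorUnitary).2
  have hspec : A = U * D * star U := hA.spectral_theorem
  have hpow : A ^ m = U * D ^ m * star U := by
    induction m with
    | zero => simpa using hU1.symm
    | succ n ihn =>
      rw [pow_succ, ihn, hspec]
      calc U * D ^ n * star U * (U * D * star U)
          = U * D ^ n * (star U * U) * (D * star U) := by
            simp only [Matrix.mul_assoc]
      _ = U * D ^ (n+1) * star U := by
            rw [hU2, Matrix.mul_one, pow_succ]
            simp only [Matrix.mul_assoc]
  rw [hpow, Matrix.trace_mul_cycle, hU2, Matrix.one_mul, hDdef,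
    Matrix.diagonal_pow, Matrix.trace_diagonal]
  refine Finset.sum_congr rfl fun i _ => ?_
  simp [RCLike.ofReal_real_eq_id]

private lemma rayleigh_le (A : Matrix V V ℝ) (hA : A.IsHermitian) (amax : ℝ)
    (hmax : ∀ i, hA.eigenvalues i ≤ amax) (x : V → ℝ) :
    x ⬝ᵥ (A *ᵥ x) ≤ amax * (x ⬝ᵥ x) := by
  set U : Matrix V V ℝ := (hA.eigenvectorUnitary : Matrix V V ℝ) with hUdef
  set D : Matrix V V ℝ := Matrix.diagonal (RCLike.ofReal ∘ hA.eigenvalues) with hDdef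
  have hU1 : U * star U = 1 := Matrix.mem_unitaryGroup_iff.mp (hA.eigenvectorUnitary).2
  have hU2 : star U * U = 1 := Matrix.mem_unitaryGroup_iff'.mp (hA.eigenvectorUnitary).2
  have hspec : A = U * D * star U := hA.spectral_theorem
  set y : V → ℝ := (star U) *ᵥ x with hydef
  have hdot : ∀ w : V → ℝ, x ⬝ᵥ (U *ᵥ w) = y ⬝ᵥ w := by
    intro w
    rw [dotProduct_mulVec]
    congr 1
    rw [← Matrix.mulVec_transpose, hydef, Matrix.star_eq_conjTranspose,
      Matrix.conjTranspose_eq_transpose_of_trivial]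
  have h1 : A *ᵥ x = U *ᵥ (D *ᵥ y) := by
    rw [hspec, hydef, Matrix.mulVec_mulVec, Matrix.mulVec_mulVec]
  have h2 : x ⬝ᵥ (A *ᵥ x) = ∑ i, hA.eigenvalues i * (y i)^2 := by
    rw [h1, hdot]
    unfold dotProduct
    refine Finset.sum_congr rfl fun i _ => ?_
    rw [hDdef, Matrix.mulVec_diagonal]
    have : (RCLike.ofReal ∘ hA.eigenvalues) i = hA.eigenvalues i := by
      simp [RCLike.ofReal_real_eq_id]
    rw [this]; ring
  have hxy : U *ᵥ y = x := by
    rw [hydef, Matrix.mulVec_mulVec, hU1, Matrix.one_mulVec]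
  have h3 : x ⬝ᵥ x = ∑ i, (y i)^2 := by
    have h4 : x ⬝ᵥ x = y ⬝ᵥ y := by
      nth_rewrite 2 [← hxy]
      rw [hdot]
    rw [h4]
    simp [dotProduct, sq]
  rw [h2, h3, Finset.mul_sum]
  exact Finset.sum_le_sum fun i _ => mul_le_mul_of_nonneg_right (hmax i) (sq_nonneg _)

private lemma eig_abs_le (A : Matrix V V ℝ) (hA : A.IsHermitian) (hnn : ∀ u v, 0 ≤ A u v)
    (amax : ℝ) (hmax : ∀ i, hA.eigenvalues i ≤ amax) (i : V) :
    |hA.eigenvalues i| ≤ amax := by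
  set z : V → ℝ := ⇑(hA.eigenvectorBasis i) with hzdef
  have hz : A *ᵥ z = hA.eigenvalues i • z := hA.mulVec_eigenvectorBasis i
  have hznz : z ≠ 0 := by
    intro hcon
    have : hA.eigenvectorBasis i = 0 := by
      apply PiLp.ext
      intro j
      have := congrFun hcon j
      simpa using this
    exact hA.eigenvectorBasis.orthonormal.ne_zero i this
  have hzz0 : 0 ≤ z ⬝ᵥ z := Finset.sum_nonneg fun j _ => mul_self_nonneg (z j)
  have hzz : 0 < z ⬝ᵥ z := by
    rcases hzz0.eq_or_lt with h | h
    · exfalso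
      apply hznz
      funext j
      have hj : ∀ j, 0 ≤ z j * z j := fun j => mul_self_nonneg _
      have := (Finset.sum_eq_zero_iff_of_nonneg (fun j _ => hj j)).mp h.symm j (Finset.mem_univ j)
      have := mul_self_eq_zero.mp this
      simpa using this
    · exact h
  have h1 : z ⬝ᵥ (A *ᵥ z) = hA.eigenvalues i * (z ⬝ᵥ z) := by
    rw [hz, dotProduct_smul, smul_eq_mul]
  set za : V → ℝ := fun j => |z j| with hzadef
  have h2 : |z ⬝ᵥ (A *ᵥ z)| ≤ za ⬝ᵥ (A *ᵥ za) := by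
    unfold dotProduct Matrix.mulVec
    calc |∑ j, z j * ∑ l, A j l * z l| ≤ ∑ j, |z j * ∑ l, A j l * z l| :=
          Finset.abs_sum_le_sum_abs _ _
    _ ≤ ∑ j, za j * ∑ l, A j l * za l := by
        refine Finset.sum_le_sum fun j _ => ?_
        rw [abs_mul]
        refine mul_le_mul_of_nonneg_left ?_ (abs_nonneg _)
        calc |∑ l, A j l * z l| ≤ ∑ l, |A j l * z l| := Finset.abs_sum_le_sum_abs _ _
        _ = ∑ l, A j l * za l := by
            refine Finset.sum_congr rfl fun l _ => ?_
            rw [abs_mul, abs_of_nonneg (hnn j l)]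
    _ = ∑ j, za j * ∑ l, (fun p q => A p q) j l * za l := rfl
  have h3 : za ⬝ᵥ (A *ᵥ za) ≤ amax * (za ⬝ᵥ za) := rayleigh_le A hA amax hmax za
  have h4 : za ⬝ᵥ za = z ⬝ᵥ z := by
    simp [dotProduct, hzadef, abs_mul_abs_self]
  have h5 : |hA.eigenvalues i| * (z ⬝ᵥ z) ≤ amax * (z ⬝ᵥ z) := by
    calc |hA.eigenvalues i| * (z ⬝ᵥ z) = |hA.eigenvalues i * (z ⬝ᵥ z)| := by
          rw [abs_mul, abs_of_nonneg hzz0]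
    _ = |z ⬝ᵥ (A *ᵥ z)| := by rw [h1]
    _ ≤ za ⬝ᵥ (A *ᵥ za) := h2
    _ ≤ amax * (za ⬝ᵥ za) := h3
    _ = amax * (z ⬝ᵥ z) := by rw [h4]
  exact le_of_mul_le_mul_right h5 hzz

end Spectral

/-- Let `k ≥ 1` and let `G` be a graph on `n ≥ 2k+1` vertices containing no odd cycle of
length at most `2k+1`.  If `μ` lists the adjacency eigenvalues of `G` in non-increasing
order, then `λ_1^{2k} + λ_2^{2k} ≤ Tr(A(G)^{2k}) / 2`. -/
theorem eig_pow_sum_le_half_trace {V : Type*} [Fintype V] [DecidableEq V]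
    (k : ℕ) (hk : 1 ≤ k) (G : SimpleGraph V) [DecidableRel G.Adj]
    (hn : 2 * k + 1 ≤ Fintype.card V)
    (hfree : OddCycleFreeUpTo G k)
    (hA : (G.adjMatrix ℝ).IsHermitian)
    (μ : Fin (Fintype.card V) → ℝ) (hmono : Antitone μ)
    (hμ : ∃ e : V ≃ Fin (Fintype.card V), hA.eigenvalues = μ ∘ e) :
    μ ⟨0, by omega⟩ ^ (2 * k) + μ ⟨1, by omega⟩ ^ (2 * k) ≤
      Matrix.trace (G.adjMatrix ℝ ^ (2 * k)) / 2 := by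
  classical
  obtain ⟨e, he⟩ := hμ
  have hn3 : 3 ≤ Fintype.card V := by omega
  have hne : e.symm ⟨0, by omega⟩ ≠ e.symm ⟨1, by omega⟩ := by
    intro hcon
    have h1 := congrArg e hcon
    rw [Equiv.apply_symm_apply, Equiv.apply_symm_apply] at h1
    have := congrArg Fin.val h1
    simp at this
  have hf0 : hA.eigenvalues (e.symm ⟨0, by omega⟩) = μ ⟨0, by omega⟩ := by
    rw [he]; simp
  have hf1 : hA.eigenvalues (e.symm ⟨1, by omega⟩) = μ ⟨1, by omega⟩ := by
    rw [he]; simp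
  have hmax : ∀ i, hA.eigenvalues i ≤ hA.eigenvalues (e.symm ⟨0, by omega⟩) := by
    intro i
    rw [hf0, he]
    simp only [Function.comp_apply]
    exact hmono (by simp [Fin.le_def])
  have hb : ∀ i, i ≠ e.symm ⟨0, by omega⟩ →
      hA.eigenvalues i ≤ hA.eigenvalues (e.symm ⟨1, by omega⟩) := by
    intro i hi
    rw [hf1, he]
    simp only [Function.comp_apply]
    refine hmono ?_
    rw [Fin.le_def]
    simp only
    have h2 : e i ≠ ⟨0, by omega⟩ := by
      intro hcon
      apply hi
      rw [← hcon, Equiv.symm_apply_apply]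
    have hv : (e i).val ≠ 0 := by
      intro hcon
      exact h2 (Fin.ext (by simpa using hcon))
    omega
  have hp1 : ∑ i, hA.eigenvalues i = 0 := by
    have h := trace_pow_eq_sum_eig (G.adjMatrix ℝ) hA 1
    rw [pow_one, SimpleGraph.trace_adjMatrix] at h
    refine (Finset.sum_congr rfl fun i _ => (pow_one _).symm).trans h.symm
  have hpk : ∑ i, hA.eigenvalues i ^ (2*k+1) = 0 := by
    rw [← trace_pow_eq_sum_eig (G.adjMatrix ℝ) hA (2*k+1)]
    rw [Matrix.trace]
    refine Finset.sum_eq_zero fun u _ => ?_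
    rw [Matrix.diag_apply, SimpleGraph.adjMatrix_pow_apply_eq_card_walk]
    norm_cast
    rw [Fintype.card_eq_zero_iff]
    constructor
    rintro ⟨w, hw⟩
    exact no_short_odd_closed_walk hfree (2*k+1) ⟨k, by ring⟩ le_rfl u w hw
  have hnn : ∀ u v : V, 0 ≤ (G.adjMatrix ℝ) u v := by
    intro u v
    by_cases h : G.Adj u v <;> simp [SimpleGraph.adjMatrix_apply, h]
  have hcap : ∀ i, |hA.eigenvalues i| ≤ hA.eigenvalues (e.symm ⟨0, by omega⟩) :=
    fun i => eig_abs_le (G.adjMatrix ℝ) hA hnn _ hmax i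
  have hkey := keyIneq k hk hA.eigenvalues (e.symm ⟨0, by omega⟩) (e.symm ⟨1, by omega⟩)
    hne hn3 hcap hb hp1 hpk
  rw [hf0, hf1] at hkey
  have htr := trace_pow_eq_sum_eig (G.adjMatrix ℝ) hA (2*k)
  rw [htr]
  linarith [hkey]
end

section
/- The eigenvalues of the adjacency matrix of the T-shaped tree T_{1,1,n-3} (the tree on n vertices with exactly one vertex u of degree 3 such that T_{1,1,n-3} − u = P_1 ∪ P_1 ∪ P_{n-3}) are 0 together with 2cos((2k−1)π/(2n−2)) for k = 1, ..., n−1. -/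
open Real

/-- The T-shaped tree `T_{1,1,n-3}` on `Fin n`: vertices `0` and `1` are leaves attached
to the degree-3 vertex `2`, and `2, 3, …, n-1` form a path; removing vertex `2` leaves
`P_1 ∪ P_1 ∪ P_{n-3}`. -/
def Tshape (n : ℕ) : SimpleGraph (Fin n) :=
  SimpleGraph.fromRel (fun i j =>
    (i.val = 0 ∧ j.val = 2) ∨ (i.val = 1 ∧ j.val = 2) ∨ (2 ≤ i.val ∧ j.val = i.val + 1))

instance (n : ℕ) : DecidableRel (Tshape n).Adj := fun a b =>
  decidable_of_iff _ (SimpleGraph.fromRel_adj _ a b).symm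


open Polynomial Matrix

lemma tshape_adj_iff {n : ℕ} (i j : Fin n) : (Tshape n).Adj i j ↔ i.val ≠ j.val ∧
    ((i.val = 0 ∧ j.val = 2) ∨ (i.val = 1 ∧ j.val = 2) ∨ (2 ≤ i.val ∧ j.val = i.val + 1) ∨
     (j.val = 0 ∧ i.val = 2) ∨ (j.val = 1 ∧ i.val = 2) ∨ (2 ≤ j.val ∧ i.val = j.val + 1)) := by
  rw [Tshape, SimpleGraph.fromRel_adj, Ne, Ne, Fin.ext_iff]
  tauto

lemma tshape_adj_last {m : ℕ} (hm : 2 ≤ m) (j : Fin (m+2)) :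
    (Tshape (m+2)).Adj (Fin.last (m+1)) j ↔ j.val = m := by
  rw [tshape_adj_iff]
  have := j.isLt
  simp only [Fin.val_last]
  omega

noncomputable def Mn (n : ℕ) : Matrix (Fin n) (Fin n) (Polynomial ℝ) :=
  charmatrix ((Tshape n).adjMatrix ℝ)

lemma Mn_apply_eq {n : ℕ} (i : Fin n) : Mn n i i = X := by
  rw [Mn, charmatrix_apply_eq, SimpleGraph.adjMatrix_apply,
    if_neg (SimpleGraph.irrefl _), map_zero, sub_zero]

lemma Mn_apply_ne {n : ℕ} {i j : Fin n} (h : i ≠ j) :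
    Mn n i j = if (Tshape n).Adj i j then -1 else 0 := by
  rw [Mn, charmatrix_apply_ne _ _ _ h, SimpleGraph.adjMatrix_apply]
  split <;> simp

lemma Mn_submatrix {n : ℕ} :
    (Mn (n+1)).submatrix Fin.castSucc Fin.castSucc = Mn n := by
  ext i j : 2
  rcases eq_or_ne i j with rfl | h
  · simp [Mn_apply_eq]
  · have h' : i.castSucc ≠ j.castSucc := by simpa [Fin.ext_iff] using h
    rw [Matrix.submatrix_apply, Mn_apply_ne h', Mn_apply_ne h]
    have : (Tshape (n+1)).Adj i.castSucc j.castSucc ↔ (Tshape n).Adj i j := by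
      rw [tshape_adj_iff, tshape_adj_iff]; simp
    rw [if_congr this rfl rfl]

lemma Mn_last_entry {m : ℕ} (hm : 2 ≤ m) (j : Fin (m+2)) :
    Mn (m+2) (Fin.last (m+1)) j = if j = Fin.last (m+1) then X
      else if j.val = m then -1 else 0 := by
  rcases eq_or_ne j (Fin.last (m+1)) with rfl | h
  · simp [Mn_apply_eq]
  · rw [if_neg h, Mn_apply_ne (Ne.symm h), if_congr (tshape_adj_last hm j) rfl rfl]

lemma Mn_col_last {m : ℕ} (hm : 2 ≤ m) (i : Fin (m+1)) :
    Mn (m+2) i.castSucc (Fin.last (m+1)) = if i = Fin.last m then -1 else 0 := by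
  rw [Mn_apply_ne (Fin.ne_of_lt (Fin.castSucc_lt_last _)),
    if_congr ((SimpleGraph.adj_comm _ _ _).trans (tshape_adj_last hm _)) rfl rfl]
  simp [Fin.ext_iff]

lemma detS {m : ℕ} (hm : 2 ≤ m) :
    ((Mn (m+2)).submatrix Fin.castSucc ((Fin.last m).castSucc.succAbove)).det
      = -(Mn m).det := by
  rw [Matrix.det_succ_column _ (Fin.last m), Finset.sum_eq_single (Fin.last m)]
  · rw [Matrix.submatrix_apply, Fin.succAbove_castSucc_self, Fin.succ_last,
      Mn_col_last hm, if_pos rfl]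
    have hmap : ((Fin.last m).castSucc.succAbove ∘ (Fin.last m).succAbove) =
        (Fin.castSucc ∘ Fin.castSucc : Fin m → Fin (m+2)) := by
      funext b
      simp only [Function.comp_apply, Fin.succAbove_last]
      exact Fin.succAbove_castSucc_of_lt _ _ (Fin.castSucc_lt_last b)
    rw [Matrix.submatrix_submatrix, hmap, Fin.succAbove_last,
      show (Fin.castSucc ∘ Fin.castSucc : Fin m → Fin (m+2)) =
        ((Fin.castSucc : Fin (m+1) → Fin (m+2)) ∘ (Fin.castSucc : Fin m → Fin (m+1))) from rfl,
      ← Matrix.submatrix_submatrix, Mn_submatrix, Mn_submatrix, Fin.val_last]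
    have : (-1 : Polynomial ℝ) ^ (m + m) = 1 := by
      rw [show m+m = 2*m by ring, pow_mul]; norm_num
    rw [this]; ring
  · intro a _ ha
    rw [Matrix.submatrix_apply, Fin.succAbove_castSucc_self, Fin.succ_last,
      Mn_col_last hm, if_neg ha]
    ring
  · intro h; exact absurd (Finset.mem_univ _) h

lemma det_Mn_rec {m : ℕ} (hm : 2 ≤ m) :
    (Mn (m+2)).det = X * (Mn (m+1)).det - (Mn m).det := by
  rw [Matrix.det_succ_row _ (Fin.last (m+1)), Fin.sum_univ_castSucc]
  have hlast : ((-1 : Polynomial ℝ)) ^ ((Fin.last (m+1) : ℕ) + (Fin.last (m+1) : ℕ)) *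
      Mn (m+2) (Fin.last (m+1)) (Fin.last (m+1)) *
      ((Mn (m+2)).submatrix (Fin.last (m+1)).succAbove (Fin.last (m+1)).succAbove).det
      = X * (Mn (m+1)).det := by
    rw [Fin.succAbove_last, Mn_apply_eq, Mn_submatrix, Fin.val_last]
    rw [show (m+1)+(m+1) = 2*(m+1) by ring, pow_mul]
    norm_num
  rw [hlast]
  have hsum : ∑ j : Fin (m+1),
      (-1 : Polynomial ℝ) ^ ((Fin.last (m+1) : ℕ) + ((j.castSucc : Fin (m+2)) : ℕ)) *
        Mn (m+2) (Fin.last (m+1)) j.castSucc *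
        ((Mn (m+2)).submatrix (Fin.last (m+1)).succAbove (j.castSucc).succAbove).det
      = -(Mn m).det := by
    rw [Finset.sum_eq_single (Fin.last m)]
    · rw [Mn_last_entry hm]
      have h1 : (Fin.last m).castSucc ≠ Fin.last (m+1) :=
        Fin.ne_of_lt (Fin.castSucc_lt_last _)
      rw [if_neg h1, if_pos (by simp), Fin.succAbove_last, detS hm, Fin.val_last, Fin.coe_castSucc, Fin.val_last]
      have : (-1 : Polynomial ℝ) ^ (m + 1 + m) = -1 := by
        rw [show m+1+m = 2*m+1 by ring, pow_succ, pow_mul]; norm_num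
      rw [this]; ring
    · intro j _ hj
      rw [Mn_last_entry hm,
        if_neg (Fin.ne_of_lt (Fin.castSucc_lt_last _)),
        if_neg (by simpa [Fin.ext_iff] using hj)]
      ring
    · intro h; exact absurd (Finset.mem_univ _) h
  rw [hsum]; ring

noncomputable def qpoly : ℕ → Polynomial ℝ
  | 0 => Polynomial.C 2
  | 1 => Polynomial.X
  | (m+2) => Polynomial.X * qpoly (m+1) - qpoly m

lemma qpoly_eval_cos (θ : ℝ) : ∀ m : ℕ, (qpoly m).eval (2 * Real.cos θ) = 2 * Real.cos (m * θ)
  | 0 => by simp [qpoly]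
  | 1 => by simp [qpoly]
  | (m+2) => by
    rw [qpoly, eval_sub, eval_mul, eval_X, qpoly_eval_cos θ (m+1), qpoly_eval_cos θ m]
    push_cast
    rw [show ((m:ℝ)+2)*θ = ((m+1)*θ) + θ by ring, show (m:ℝ)*θ = ((m+1)*θ) - θ by ring,
      Real.cos_add, Real.cos_sub]
    ring

lemma qpoly_monic : ∀ m : ℕ, (qpoly (m+1)).Monic ∧ (qpoly (m+1)).natDegree = m+1
  | 0 => by simp [qpoly, monic_X]
  | 1 => by
    constructor
    · have : qpoly 2 = Polynomial.X ^ 2 - Polynomial.C 2 := by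
        rw [qpoly, qpoly, qpoly]; ring
      rw [this]
      exact (monic_X_pow 2).sub_of_left (by
        simpa using (degree_C_le).trans_lt (by norm_num [degree_X_pow]))
    · have : qpoly 2 = Polynomial.X ^ 2 - Polynomial.C 2 := by
        rw [qpoly, qpoly, qpoly]; ring
      rw [this]
      compute_degree!
  | (m+2) => by
    obtain ⟨h1, h1d⟩ := qpoly_monic (m+1)
    obtain ⟨h0, h0d⟩ := qpoly_monic m
    have hx : (Polynomial.X * qpoly (m+2)).Monic := monic_X.mul h1
    have hxd : (Polynomial.X * qpoly (m+2)).natDegree = m+3 := by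
      rw [natDegree_mul (X_ne_zero) h1.ne_zero, natDegree_X, h1d]; omega
    have hdeg : (qpoly (m+1)).degree < (Polynomial.X * qpoly (m+2)).degree := by
      rw [degree_eq_natDegree h0.ne_zero, degree_eq_natDegree hx.ne_zero, hxd, h0d]
      exact_mod_cast by omega
    constructor
    · rw [qpoly]; exact hx.sub_of_left hdeg
    · rw [qpoly, natDegree_sub_eq_left_of_natDegree_lt, hxd]
      rw [hxd, h0d]; omega

lemma det_Mn_two : (Mn 2).det = Polynomial.X * qpoly 1 := by
  rw [Matrix.det_fin_two, Mn_apply_eq, Mn_apply_eq,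
    Mn_apply_ne (show (0:Fin 2) ≠ 1 by decide), Mn_apply_ne (show (1:Fin 2) ≠ 0 by decide),
    if_neg (by decide), if_neg (by decide), qpoly]
  ring

lemma det_Mn_three : (Mn 3).det = Polynomial.X * qpoly 2 := by
  have h : ∀ i j : Fin 3, i ≠ j → Mn 3 i j = if (Tshape 3).Adj i j then -1 else 0 :=
    fun i j hij => Mn_apply_ne hij
  rw [Matrix.det_fin_three, Mn_apply_eq, Mn_apply_eq, Mn_apply_eq,
    h 0 1 (by decide), h 0 2 (by decide), h 1 0 (by decide), h 1 2 (by decide),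
    h 2 0 (by decide), h 2 1 (by decide)]
  simp only [if_neg (show ¬(Tshape 3).Adj 0 1 by decide),
    if_neg (show ¬(Tshape 3).Adj 1 0 by decide),
    if_pos (show (Tshape 3).Adj 0 2 by decide), if_pos (show (Tshape 3).Adj 2 0 by decide),
    if_pos (show (Tshape 3).Adj 1 2 by decide), if_pos (show (Tshape 3).Adj 2 1 by decide),
    qpoly, show (Polynomial.C (2:ℝ)) = 2 from map_ofNat _ 2]
  ring

lemma det_Mn (m : ℕ) : (Mn (m+2)).det = Polynomial.X * qpoly (m+1) := by
  induction m using Nat.twoStepInduction with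
  | zero => exact det_Mn_two
  | one => exact det_Mn_three
  | more m ih1 ih2 =>
    have hq : qpoly (m+2+1) = Polynomial.X * qpoly (m+1+1) - qpoly (m+1) := rfl
    rw [det_Mn_rec (by omega), ih1, ih2, hq]
    ring

lemma mem_spectrum_iff_det (n : ℕ) (x : ℝ) :
    x ∈ spectrum ℝ ((Tshape n).adjMatrix ℝ) ↔ ((Mn n).det).eval x = 0 := by
  rw [spectrum.mem_iff, Matrix.isUnit_iff_isUnit_det, isUnit_iff_ne_zero, not_ne_iff]
  have h : (algebraMap ℝ (Matrix (Fin n) (Fin n) ℝ) x - (Tshape n).adjMatrix ℝ)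
      = (Mn n).map (Polynomial.eval x) := by
    ext i j
    rcases eq_or_ne i j with rfl | hij
    · simp [Mn_apply_eq, Matrix.algebraMap_matrix_apply]
    · rw [Matrix.map_apply, Mn_apply_ne hij]
      simp only [Matrix.sub_apply, Matrix.algebraMap_matrix_apply, if_neg hij,
        SimpleGraph.adjMatrix_apply]
      split_ifs <;> simp
  rw [h, ← Polynomial.coe_evalRingHom, ← RingHom.mapMatrix_apply, ← RingHom.map_det, Polynomial.coe_evalRingHom]

lemma qpoly_root_iff {n : ℕ} (hn : 4 ≤ n) (x : ℝ) :
    (qpoly (n-1)).eval x = 0 ↔ ∃ k : ℕ, 1 ≤ k ∧ k ≤ n - 1 ∧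
      x = 2 * Real.cos ((2 * (k : ℝ) - 1) * π / (2 * (n : ℝ) - 2)) := by
  set m : ℕ := n - 1 with hm
  have hm3 : 3 ≤ m := by omega
  have hmR : (m : ℝ) = (n : ℝ) - 1 := by
    have : ((m : ℕ) : ℝ) = ((n : ℕ) : ℝ) - 1 := by
      rw [hm]; push_cast [Nat.cast_sub (by omega : 1 ≤ n)]; ring
    exact this
  have hden : 2 * (n : ℝ) - 2 = 2 * (m : ℝ) := by rw [hmR]; ring
  have hmpos : (0:ℝ) < m := by positivity
  set f : ℕ → ℝ := fun k => 2 * Real.cos ((2 * (k : ℝ) - 1) * π / (2 * (m : ℝ)))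
  have hroot : ∀ k : ℕ, 1 ≤ k → k ≤ m → (qpoly m).eval (f k) = 0 := by
    intro k hk1 hk2
    have : f k = 2 * Real.cos ((2 * (k:ℝ) - 1) * π / (2 * (m:ℝ))) := rfl
    rw [this, qpoly_eval_cos]
    have harg : (m : ℝ) * ((2 * (k:ℝ) - 1) * π / (2 * (m:ℝ)))
        = (2 * ((k:ℤ) - 1 : ℤ) + 1) * π / 2 := by
      push_cast
      field_simp
      ring
    rw [harg, Real.cos_eq_zero_iff.2 ⟨((k:ℤ) - 1), rfl⟩, mul_zero]
  have hangle : ∀ k : ℕ, 1 ≤ k → k ≤ m →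
      (2 * (k:ℝ) - 1) * π / (2 * (m:ℝ)) ∈ Set.Icc 0 π := by
    intro k hk1 hk2
    constructor
    · apply div_nonneg _ (by positivity)
      have : (1:ℝ) ≤ (k:ℝ) := by exact_mod_cast hk1
      nlinarith [Real.pi_pos]
    · rw [div_le_iff₀ (by positivity)]
      have : (k:ℝ) ≤ (m:ℝ) := by exact_mod_cast hk2
      nlinarith [Real.pi_pos]
  have hinj : Set.InjOn f (Finset.Icc 1 m) := by
    intro a ha b hb hab
    simp only [Finset.coe_Icc, Set.mem_Icc] at ha hb
    have ha' := hangle a ha.1 ha.2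
    have hb' := hangle b hb.1 hb.2
    have hcc : (2 * (a:ℝ) - 1) * π / (2 * (m:ℝ)) = (2 * (b:ℝ) - 1) * π / (2 * (m:ℝ)) :=
      Real.injOn_cos ha' hb' (mul_left_cancel₀ two_ne_zero hab)
    rw [mul_div_assoc, mul_div_assoc] at hcc
    have hne : π / (2 * (m:ℝ)) ≠ 0 := by positivity
    have h2 := mul_right_cancel₀ hne hcc
    have : (a:ℝ) = (b:ℝ) := by linarith
    exact_mod_cast this
  have hq : (qpoly m).Monic ∧ (qpoly m).natDegree = m := by
    have h1 : m - 1 + 1 = m := by omega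
    have h2 := qpoly_monic (m - 1)
    rwa [h1] at h2
  have hq0 : qpoly m ≠ 0 := hq.1.ne_zero
  set F : Finset ℝ := (Finset.Icc 1 m).image f with hF
  have hFcard : F.card = m := by
    rw [hF, Finset.card_image_of_injOn hinj, Nat.card_Icc]; omega
  have hFsub : F ⊆ (qpoly m).roots.toFinset := by
    intro y hy
    rw [hF, Finset.mem_image] at hy
    obtain ⟨k, hk, rfl⟩ := hy
    rw [Finset.mem_Icc] at hk
    rw [Multiset.mem_toFinset, Polynomial.mem_roots hq0]
    exact hroot k hk.1 hk.2
  have hFeq : F = (qpoly m).roots.toFinset := by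
    apply Finset.eq_of_subset_of_card_le hFsub
    calc (qpoly m).roots.toFinset.card ≤ (qpoly m).roots.card :=
          Multiset.toFinset_card_le _
      _ ≤ (qpoly m).natDegree := (qpoly m).card_roots'
      _ = m := hq.2
      _ = F.card := hFcard.symm
  constructor
  · intro hx
    have : x ∈ F := by
      rw [hFeq, Multiset.mem_toFinset, Polynomial.mem_roots hq0]
      exact hx
    rw [hF, Finset.mem_image] at this
    obtain ⟨k, hk, hfk⟩ := this
    rw [Finset.mem_Icc] at hk
    exact ⟨k, hk.1, hk.2, by rw [← hfk, hden]⟩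
  · rintro ⟨k, hk1, hk2, rfl⟩
    rw [hden]
    exact hroot k hk1 hk2

/-- The adjacency eigenvalues of the T-shaped tree `T_{1,1,n-3}` (on `n ≥ 4` vertices) are
`0` together with `2cos((2k−1)π/(2n−2))` for `k = 1, …, n−1`. -/
theorem spectrum_Tshape (n : ℕ) (hn : 4 ≤ n) :
    spectrum ℝ ((Tshape n).adjMatrix ℝ) =
      {x : ℝ | x = 0 ∨ ∃ k : ℕ, 1 ≤ k ∧ k ≤ n - 1 ∧
        x = 2 * Real.cos ((2 * (k : ℝ) - 1) * π / (2 * (n : ℝ) - 2))} := by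
  have hdet : (Mn n).det = Polynomial.X * qpoly (n - 1) := by
    obtain ⟨N, rfl⟩ : ∃ N, n = N + 2 := ⟨n - 2, by omega⟩
    rw [show N + 2 - 1 = N + 1 from rfl, det_Mn]
  ext x
  simp only [Set.mem_setOf_eq]
  rw [mem_spectrum_iff_det, hdet, Polynomial.eval_mul, Polynomial.eval_X, mul_eq_zero,
    qpoly_root_iff hn]
end
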